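/- arXiv:2201.08884 — 9 statements merged into one kernel-verified Lean document; each statement's English description precedes it below -/
import Mathlib

section
/- If F(x₀,...,x₄) = x₂q₂ + x₃q₃ + x₄²(a₂x₂ + a₃x₃ + a₄x₄) with a₄ ≠ 0 defines a cubic threefold, then F can be rewritten as F = x₂q₂' + x₃q₃' + a₄x₄³ for suitable quadrics q₂', q₃'; such a threefold is not forced to be singular (it need not contain the plane {x₂=x₃=0}). -/
open MvPolynomial

/-- If `F = x₂q₂ + x₃q₃ + x₄²(a₂x₂ + a₃x₃ + a₄x₄)` with `a₄ ≠ 0`, then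
`F = x₂q₂' + x₃q₃' + a₄x₄³` for suitable quadrics `q₂', q₃'`, and `F` does not vanish
identically on the plane `{x₂ = x₃ = 0}` (so the threefold is not forced to be singular). -/
theorem triple_line_normal_form
    (F q₂ q₃ : MvPolynomial (Fin 5) ℂ) (a₂ a₃ a₄ : ℂ)
    (h₂ : q₂.IsHomogeneous 2) (h₃ : q₃.IsHomogeneous 2) (ha₄ : a₄ ≠ 0)
    (hF : F = X 2 * q₂ + X 3 * q₃ + X 4 ^ 2 * (C a₂ * X 2 + C a₃ * X 3 + C a₄ * X 4)) :
    (∃ q₂' q₃' : MvPolynomial (Fin 5) ℂ,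
      q₂'.IsHomogeneous 2 ∧ q₃'.IsHomogeneous 2 ∧
      F = X 2 * q₂' + X 3 * q₃' + C a₄ * X 4 ^ 3) ∧
    (∃ x₀ x₁ x₄ : ℂ, eval ![x₀, x₁, 0, 0, x₄] F ≠ 0) := by
  constructor
  · refine ⟨q₂ + C a₂ * X 4 ^ 2, q₃ + C a₃ * X 4 ^ 2, ?_, ?_, ?_⟩
    · exact h₂.add ((isHomogeneous_C _ _).mul ((isHomogeneous_X _ _).pow 2))
    · exact h₃.add ((isHomogeneous_C _ _).mul ((isHomogeneous_X _ _).pow 2))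
    · rw [hF]; ring
  · refine ⟨0, 0, 1, ?_⟩
    rw [hF]
    simp [eval_X, eval_C]
    exact ha₄
end

section
/- Let F = x₂q₂ + x₃q₃ + x₄q₄ define a smooth cubic threefold X containing ℓ₀ = {x₂=x₃=x₄=0}, and suppose the binary quadratic form q₄(t₀,t₁,0,0,0) vanishes identically (ℓ₀ of second type with tangent plane {x₂=x₃=0}). Then the two binary quadratic forms a(t₀,t₁) = q₂(t₀,t₁,0,0,0) and b(t₀,t₁) = q₃(t₀,t₁,0,0,0) have no common projective root; equivalently their resultant is nonzero. -/
/-!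
On `ℓ₀` every `xⱼ` with `j ≥ 2` vanishes, so there the gradient of `F = x₂q₂ + x₃q₃ + x₄q₄` is
`(0, 0, q₂, q₃, q₄)`. Since `q₄` vanishes on `ℓ₀`, a common root of `q₂` and `q₃` on `ℓ₀` would be
a singular point of `X`.
-/

open MvPolynomial

theorem MvPolynomial.eval_pderiv_X_mul_eq_zero {R σ : Type*} [CommSemiring R] {p : σ → R}
    {j : σ} {q : MvPolynomial σ R} (hpj : p j = 0) (hq : eval p q = 0) (i : σ) :
    eval p (pderiv i (X j * q)) = 0 := by
  simp [Derivation.leibniz, hpj, hq]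

theorem second_type_q2_q3_no_common_root_general
    (F q₂ q₃ q₄ : MvPolynomial (Fin 5) ℂ)
    (hF : F = X 2 * q₂ + X 3 * q₃ + X 4 * q₄)
    (hsmooth : ∀ p : Fin 5 → ℂ,
      eval p F = 0 → (∀ i : Fin 5, eval p (pderiv i F) = 0) → p = 0)
    (hq₄ : ∀ t₀ t₁ : ℂ, eval ![t₀, t₁, 0, 0, 0] q₄ = 0) :
    ∀ t₀ t₁ : ℂ, ¬(t₀ = 0 ∧ t₁ = 0) →
      ¬(eval ![t₀, t₁, 0, 0, 0] q₂ = 0 ∧ eval ![t₀, t₁, 0, 0, 0] q₃ = 0) := by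
  rintro t₀ t₁ hne ⟨hq₂, hq₃⟩
  have hF_zero : eval ![t₀, t₁, 0, 0, 0] F = 0 := by simp [hF]
  have hgrad_zero (i : Fin 5) : eval ![t₀, t₁, 0, 0, 0] (pderiv i F) = 0 := by
    rw [hF, map_add, map_add, map_add, map_add, eval_pderiv_X_mul_eq_zero (j := 2) rfl hq₂,
      eval_pderiv_X_mul_eq_zero (j := 3) rfl hq₃, eval_pderiv_X_mul_eq_zero (j := 4) rfl (hq₄ t₀ t₁)]
    rw [add_zero, add_zero]
  have hp_zero := hsmooth _ hF_zero hgrad_zero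
  exact hne ⟨congrFun hp_zero 0, congrFun hp_zero 1⟩

/-- If `F = x₂q₂ + x₃q₃ + x₄q₄` defines a smooth cubic threefold and `q₄` vanishes
identically on `ℓ₀ = {x₂=x₃=x₄=0}` (so `ℓ₀` is of the second type with tangent plane
`{x₂=x₃=0}`), then the binary quadratic forms `q₂(t₀,t₁,0,0,0)` and `q₃(t₀,t₁,0,0,0)`
have no common projective root. -/
theorem second_type_q2_q3_no_common_root
    (F q₂ q₃ q₄ : MvPolynomial (Fin 5) ℂ)
    (h₂ : q₂.IsHomogeneous 2) (h₃ : q₃.IsHomogeneous 2) (h₄ : q₄.IsHomogeneous 2)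
    (hF : F = X 2 * q₂ + X 3 * q₃ + X 4 * q₄)
    (hsmooth : ∀ p : Fin 5 → ℂ,
      eval p F = 0 → (∀ i : Fin 5, eval p (pderiv i F) = 0) → p = 0)
    (hq₄ : ∀ t₀ t₁ : ℂ, eval ![t₀, t₁, 0, 0, 0] q₄ = 0) :
    ∀ t₀ t₁ : ℂ, ¬(t₀ = 0 ∧ t₁ = 0) →
      ¬(eval ![t₀, t₁, 0, 0, 0] q₂ = 0 ∧ eval ![t₀, t₁, 0, 0, 0] q₃ = 0) :=
  second_type_q2_q3_no_common_root_general F q₂ q₃ q₄ hF hsmooth hq₄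
end

section
/- Let a(t₀,t₁), b(t₀,t₁) be binary quadratic forms over ℂ with nonzero resultant, and let c₁, c₀ ∈ ℂ. If the two determinants det[[a₂,b₂,-c₁],[a₁,b₁,-c₀],[a₀,b₀,0]] and det[[a₂,b₂,0],[a₁,b₁,c₁],[a₀,b₀,c₀]] both vanish (where a = a₂t₀²+a₁t₀t₁+a₀t₁², similarly b), then c₀ = c₁ = 0. -/
/-!
Expanding the two 3×3 determinants along their last column writes them as the entries of
`B *ᵥ ![c₁, c₀]`, where `B = !![-M₀, M₁; -M₁, M₂]` and `Mᵢ` is the 2×2 minor of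
`!![a₂, b₂; a₁, b₁; a₀, b₀]` obtained by deleting row `i`. The Sylvester determinant of the
two quadratics equals `det B = M₁² - M₀ M₂`, so `B` is invertible and `(c₁, c₀) = 0`.
-/

open Matrix

namespace Matrix

variable {R : Type*} [CommRing R] {n : ℕ}

def maxMinor (A : Matrix (Fin (n + 1)) (Fin n) R) (i : Fin (n + 1)) : R :=
  (A.submatrix i.succAbove id).det

theorem det_of_snoc_eq_sum (A : Matrix (Fin (n + 1)) (Fin n) R) (z : Fin (n + 1) → R) :
    (of fun i => Fin.snoc (A i) (z i) : Matrix (Fin (n + 1)) (Fin (n + 1)) R).det =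
      ∑ i : Fin (n + 1), (-1) ^ ((i : ℕ) + n) * z i * A.maxMinor i := by
  rw [det_succ_column _ (Fin.last n)]
  refine Finset.sum_congr rfl fun i _ => ?_
  simp [maxMinor, submatrix]

theorem det_fin_three_eq_maxMinor (A : Matrix (Fin 3) (Fin 2) R) (x y z : R) :
    !![A 0 0, A 0 1, x; A 1 0, A 1 1, y; A 2 0, A 2 1, z].det =
      x * A.maxMinor 0 - y * A.maxMinor 1 + z * A.maxMinor 2 := by
  have hA : !![A 0 0, A 0 1, x; A 1 0, A 1 1, y; A 2 0, A 2 1, z] =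
      of fun i => Fin.snoc (A i) (![x, y, z] i) := by
    ext i j
    fin_cases i <;> fin_cases j <;> rfl
  rw [hA, det_of_snoc_eq_sum]
  simp [Fin.sum_univ_three, sub_eq_add_neg, pow_succ]

end Matrix

variable {R : Type*} [CommRing R]

def minorMatrix (A : Matrix (Fin 3) (Fin 2) R) : Matrix (Fin 2) (Fin 2) R :=
  !![-A.maxMinor 0, A.maxMinor 1; -A.maxMinor 1, A.maxMinor 2]

theorem det_minorMatrix (A : Matrix (Fin 3) (Fin 2) R) :
    (minorMatrix A).det = A.maxMinor 1 ^ 2 - A.maxMinor 0 * A.maxMinor 2 := by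
  rw [minorMatrix, det_fin_two_of]
  ring

theorem minorMatrix_mulVec (A : Matrix (Fin 3) (Fin 2) R) (c₁ c₀ : R) :
    minorMatrix A *ᵥ ![c₁, c₀] =
      ![!![A 0 0, A 0 1, -c₁; A 1 0, A 1 1, -c₀; A 2 0, A 2 1, 0].det,
        !![A 0 0, A 0 1, 0; A 1 0, A 1 1, c₁; A 2 0, A 2 1, c₀].det] := by
  simp only [det_fin_three_eq_maxMinor]
  ext i
  fin_cases i <;> simp [minorMatrix]

theorem det_sylvester_quadratic_eq_det_minorMatrix (a₂ a₁ a₀ b₂ b₁ b₀ : R) :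
    !![a₂, a₁, a₀, 0; 0, a₂, a₁, a₀; b₂, b₁, b₀, 0; 0, b₂, b₁, b₀].det =
      (minorMatrix !![a₂, b₂; a₁, b₁; a₀, b₀]).det := by
  rw [det_minorMatrix]
  simp [det_succ_row_zero, Fin.sum_univ_succ, Fin.succAbove, maxMinor]
  ring

/-- Linear-algebra core: if the binary quadratics `a = a₂t₀²+a₁t₀t₁+a₀t₁²` and
`b = b₂t₀²+b₁t₀t₁+b₀t₁²` have nonzero resultant, and the two stated 3×3 determinants
vanish, then `c₀ = c₁ = 0`. -/
theorem dets_vanish_implies_c_zero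
    (a₂ a₁ a₀ b₂ b₁ b₀ c₀ c₁ : ℂ)
    (hres : Matrix.det !![a₂, a₁, a₀, 0; 0, a₂, a₁, a₀; b₂, b₁, b₀, 0; 0, b₂, b₁, b₀] ≠ 0)
    (h₁ : Matrix.det !![a₂, b₂, -c₁; a₁, b₁, -c₀; a₀, b₀, 0] = 0)
    (h₂ : Matrix.det !![a₂, b₂, 0; a₁, b₁, c₁; a₀, b₀, c₀] = 0) :
    c₀ = 0 ∧ c₁ = 0 := by
  rw [det_sylvester_quadratic_eq_det_minorMatrix] at hres
  have hc : minorMatrix !![a₂, b₂; a₁, b₁; a₀, b₀] *ᵥ ![c₁, c₀] = 0 := by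
    rw [minorMatrix_mulVec]
    ext i
    fin_cases i
    exacts [h₁, h₂]
  have hzero := eq_zero_of_mulVec_eq_zero hres hc
  exact ⟨congrFun hzero 1, congrFun hzero 0⟩
end

section
/- For the Fermat cubic F₄, each line ℓ with coordinates (p₀₂,p₀₃,p₀₄,p₁₂,p₁₃,p₁₄) = (0,ω,0,η,0,0), where ω³ = -1 and η³ = 1, i.e. the line spanned by v₀ = (1,0,-η,0,0) and v₁ = (0,1,0,ω,0), lies on F₄ and is a triple line: the plane P spanned by ℓ and v₂ = (0,0,0,0,1) satisfies F₄(t₀v₀+t₁v₁+t₂v₂) = t₂³. -/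
/-- For `ω³ = -1` and `η³ = 1`, the line spanned by `v₀ = (1,0,-η,0,0)` and
`v₁ = (0,1,0,ω,0)` lies on the Fermat cubic and is a triple line: with
`v₂ = (0,0,0,0,1)` the plane `P = span(v₀,v₁,v₂)` satisfies
`F₄(t₀v₀+t₁v₁+t₂v₂) = t₂³`, so `P ∩ F₄ = 3ℓ`. -/
theorem fermat_triple_line
    (ω η : ℂ) (hω : ω ^ 3 = -1) (hη : η ^ 3 = 1) :
    (∀ t₀ t₁ : ℂ,
      t₀ ^ 3 + t₁ ^ 3 + (-t₀ * η) ^ 3 + (t₁ * ω) ^ 3 + (0 : ℂ) ^ 3 = 0) ∧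
    (∀ t₀ t₁ t₂ : ℂ,
      t₀ ^ 3 + t₁ ^ 3 + (-t₀ * η) ^ 3 + (t₁ * ω) ^ 3 + t₂ ^ 3 = t₂ ^ 3) := by
  constructor <;> intros t₀ t₁ <;>
    intros <;> rw [show (-t₀*η)^3 = -(t₀^3*η^3) by ring, show (t₁*ω)^3 = t₁^3*ω^3 by ring, hω, hη] <;> ring
end

section
/- For the Fermat cubic F₄, in the affine chart p₀₁=1, a line ℓ on F₄ (with Plücker coordinates (p₀₂,p₀₃,p₀₄,p₁₂,p₁₃,p₁₄)) is of the second type if and only if (p₀₄p₁₃ - p₀₃p₁₄)(p₀₄p₁₂ - p₀₂p₁₄)(p₀₃p₁₂ - p₀₂p₁₃) = 0. -/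
/-- For a line `ℓ` on the Fermat cubic, in the chart `p₀₁ = 1` (with `ℓ` spanned by
`v₀ = (1,0,-p₁₂,-p₁₃,-p₁₄)`, `v₁ = (0,1,p₀₂,p₀₃,p₀₄)`), `ℓ` is of the second type —
i.e. the determinant of the 3×3 matrix `(φᵢ^{j,k})` of coefficients of the restricted
partials `∂F₄/∂xᵢ(t₀v₀+t₁v₁) = Σ t₀ʲt₁ᵏ φᵢ^{j,k}` for `i = 2,3,4` vanishes — iff
`(p₀₄p₁₃ - p₀₃p₁₄)(p₀₄p₁₂ - p₀₂p₁₄)(p₀₃p₁₂ - p₀₂p₁₃) = 0`. -/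
theorem fermat_second_type_iff
    (p₀₂ p₀₃ p₀₄ p₁₂ p₁₃ p₁₄ : ℂ)
    (hline : p₁₂ ^ 3 + p₁₃ ^ 3 + p₁₄ ^ 3 = 1 ∧
      p₀₂ * p₁₂ ^ 2 + p₀₃ * p₁₃ ^ 2 + p₀₄ * p₁₄ ^ 2 = 0 ∧
      p₀₂ ^ 2 * p₁₂ + p₀₃ ^ 2 * p₁₃ + p₀₄ ^ 2 * p₁₄ = 0 ∧
      p₀₂ ^ 3 + p₀₃ ^ 3 + p₀₄ ^ 3 = -1) :
    Matrix.det !![3 * p₁₂ ^ 2, 3 * p₁₃ ^ 2, 3 * p₁₄ ^ 2;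
                  -6 * p₀₂ * p₁₂, -6 * p₀₃ * p₁₃, -6 * p₀₄ * p₁₄;
                  3 * p₀₂ ^ 2, 3 * p₀₃ ^ 2, 3 * p₀₄ ^ 2] = 0 ↔
    (p₀₄ * p₁₃ - p₀₃ * p₁₄) * (p₀₄ * p₁₂ - p₀₂ * p₁₄) * (p₀₃ * p₁₂ - p₀₂ * p₁₃) = 0 := by
  have key : Matrix.det !![3 * p₁₂ ^ 2, 3 * p₁₃ ^ 2, 3 * p₁₄ ^ 2;
                  -6 * p₀₂ * p₁₂, -6 * p₀₃ * p₁₃, -6 * p₀₄ * p₁₄;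
                  3 * p₀₂ ^ 2, 3 * p₀₃ ^ 2, 3 * p₀₄ ^ 2] =
      -54 * ((p₀₄ * p₁₃ - p₀₃ * p₁₄) * (p₀₄ * p₁₂ - p₀₂ * p₁₄) * (p₀₃ * p₁₂ - p₀₂ * p₁₃)) := by
    simp [Matrix.det_fin_three]; ring
  rw [key, mul_eq_zero]
  simp
end

section
/- The system of equations p₁₂³+p₁₃³+p₁₄³=1, p₀₂p₁₂²+p₀₃p₁₃²+p₀₄p₁₄²=0, p₀₂²p₁₂+p₀₃²p₁₃+p₀₄²p₁₄=0, p₀₂³+p₀₃³+p₀₄³=-1, together with p₀₄p₁₃-p₀₃p₁₄=0 and p₀₄p₁₂-p₀₂p₁₄=0, has exactly 18 solutions in ℂ⁶: the 9 solutions (0, ω, 0, η, 0, 0) with ω³=-1, η³=1, and the 9 solutions (ω, 0, 0, 0, η, 0) with ω³=-1, η³=1. -/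
/-!
Write `(a, b, c) = (p₀₂, p₀₃, p₀₄)` and `(x, y, z) = (p₁₂, p₁₃, p₁₄)`. The minors give
`c x = a z` and `c y = b z`, so `c = c (x³ + y³ + z³) = z (a x² + b y² + c z²) = 0`, and then
`z = -z (a³ + b³) = 0` likewise. What remains is the plane system `x³ + y³ = 1`,
`a x² + b y² = 0`, `a² x + b² y = 0`, `a³ + b³ = -1`, in which
`b² y = b² y (x³ + y³) = (b y²)² - (a x²)² = 0` and hence `a² x = 0`. Since neither `a = b = 0`
nor `x = y = 0` is possible, either `a = y = 0` or `b = x = 0`.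
-/

open Polynomial in
theorem IsPrimitiveRoot.ncard_setOf_pow_eq {R : Type*} [CommRing R] [IsDomain R] {n : ℕ}
    (hn : 0 < n) {ζ : R} (hζ : IsPrimitiveRoot ζ n) {α a : R} (hα : α ≠ 0) (ha : α ^ n = a) :
    {x : R | x ^ n = a}.ncard = n := by
  classical
  have hroots : {x : R | x ^ n = a} = ↑(nthRootsFinset n a) := by
    ext x; simp [Polynomial.mem_nthRootsFinset hn]
  rw [hroots, Set.ncard_coe_finset, nthRootsFinset_def,
    Multiset.toFinset_card_of_nodup (hζ.nthRoots_nodup (ha ▸ pow_ne_zero n hα)),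
    hζ.card_nthRoots, if_pos ⟨α, ha⟩]

theorem Complex.ncard_setOf_pow_eq {n : ℕ} (hn : 0 < n) {α a : ℂ} (hα : α ≠ 0)
    (ha : α ^ n = a) : {x : ℂ | x ^ n = a}.ncard = n :=
  (Complex.isPrimitiveRoot_exp n hn.ne').ncard_setOf_pow_eq hn hα ha

namespace FermatCubic

section

variable {R : Type*} [CommRing R] {a b c x y z : R}

theorem eq_zero_of_minors_eq_zero (h1 : x ^ 3 + y ^ 3 + z ^ 3 = 1)
    (h2 : a * x ^ 2 + b * y ^ 2 + c * z ^ 2 = 0) (h4 : a ^ 3 + b ^ 3 + c ^ 3 = -1)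
    (h5 : c * y - b * z = 0) (h6 : c * x - a * z = 0) : c = 0 ∧ z = 0 := by
  have hc : c = 0 := by linear_combination -c * h1 + x ^ 2 * h6 + y ^ 2 * h5 + z * h2
  subst hc
  exact ⟨rfl, by linear_combination z * h4 + a ^ 2 * h6 + b ^ 2 * h5⟩

theorem sq_mul_eq_zero (h1 : x ^ 3 + y ^ 3 = 1) (h2 : a * x ^ 2 + b * y ^ 2 = 0)
    (h3 : a ^ 2 * x + b ^ 2 * y = 0) : a ^ 2 * x = 0 ∧ b ^ 2 * y = 0 := by
  have hb : b ^ 2 * y = 0 := by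
    linear_combination -b ^ 2 * y * h1 + x ^ 3 * h3 + (b * y ^ 2 - a * x ^ 2) * h2
  exact ⟨by linear_combination h3 - hb, hb⟩

variable [IsDomain R]

theorem plane_solutions (h1 : x ^ 3 + y ^ 3 = 1) (h2 : a * x ^ 2 + b * y ^ 2 = 0)
    (h3 : a ^ 2 * x + b ^ 2 * y = 0) (h4 : a ^ 3 + b ^ 3 = -1) :
    (a = 0 ∧ b ^ 3 = -1 ∧ x ^ 3 = 1 ∧ y = 0) ∨ (a ^ 3 = -1 ∧ b = 0 ∧ x = 0 ∧ y ^ 3 = 1) := by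
  obtain ⟨hax, hby⟩ := sq_mul_eq_zero h1 h2 h3
  rcases mul_eq_zero.mp hax with ha | rfl
  · obtain rfl := pow_eq_zero_iff two_ne_zero |>.mp ha
    have hb : b ^ 3 = -1 := by linear_combination h4
    have hy : y = 0 := (mul_eq_zero.mp hby).resolve_left fun h => by
      simp [pow_eq_zero_iff two_ne_zero |>.mp h] at hb
    exact Or.inl ⟨rfl, hb, by linear_combination h1 - hy * (y ^ 2), hy⟩
  · have hy : y ^ 3 = 1 := by linear_combination h1
    have hb : b = 0 := pow_eq_zero_iff two_ne_zero |>.mp <|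
      (mul_eq_zero.mp hby).resolve_right fun h => by simp [h] at hy
    exact Or.inr ⟨by linear_combination h4 - hb * b ^ 2, hb, rfl, hy⟩

theorem solutions_iff :
    (x ^ 3 + y ^ 3 + z ^ 3 = 1 ∧
       a * x ^ 2 + b * y ^ 2 + c * z ^ 2 = 0 ∧
       a ^ 2 * x + b ^ 2 * y + c ^ 2 * z = 0 ∧
       a ^ 3 + b ^ 3 + c ^ 3 = -1 ∧
       c * y - b * z = 0 ∧
       c * x - a * z = 0) ↔
      ((a = 0 ∧ b ^ 3 = -1 ∧ c = 0 ∧ x ^ 3 = 1 ∧ y = 0 ∧ z = 0) ∨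
       (a ^ 3 = -1 ∧ b = 0 ∧ c = 0 ∧ x = 0 ∧ y ^ 3 = 1 ∧ z = 0)) := by
  constructor
  · rintro ⟨h1, h2, h3, h4, h5, h6⟩
    obtain ⟨rfl, rfl⟩ := eq_zero_of_minors_eq_zero h1 h2 h4 h5 h6
    simp only [zero_pow three_ne_zero, zero_pow two_ne_zero, add_zero, mul_zero] at h1 h2 h3 h4
    rcases plane_solutions h1 h2 h3 h4 with ⟨rfl, hb, hx, rfl⟩ | ⟨ha, rfl, rfl, hy⟩
    · exact Or.inl ⟨rfl, hb, rfl, hx, rfl, rfl⟩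
    · exact Or.inr ⟨ha, rfl, rfl, rfl, hy, rfl⟩
  · rintro (⟨rfl, hb, rfl, hx, rfl, rfl⟩ | ⟨ha, rfl, rfl, rfl, hy, rfl⟩)
    · exact ⟨by linear_combination hx, by ring, by ring, by linear_combination hb, by ring,
        by ring⟩
    · exact ⟨by linear_combination hy, by ring, by ring, by linear_combination ha, by ring,
        by ring⟩

end

theorem ncard_solutions :
    {p : ℂ × ℂ × ℂ × ℂ × ℂ × ℂ |
      (p.1 = 0 ∧ p.2.1 ^ 3 = -1 ∧ p.2.2.1 = 0 ∧ p.2.2.2.1 ^ 3 = 1 ∧ p.2.2.2.2.1 = 0 ∧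
        p.2.2.2.2.2 = 0) ∨
      (p.1 ^ 3 = -1 ∧ p.2.1 = 0 ∧ p.2.2.1 = 0 ∧ p.2.2.2.1 = 0 ∧ p.2.2.2.2.1 ^ 3 = 1 ∧
        p.2.2.2.2.2 = 0)}.ncard = 18 := by
  set S : Set (ℂ × ℂ) := {ω | ω ^ 3 = -1} ×ˢ {η | η ^ 3 = 1}
  have hS : S.ncard = 9 := by
    rw [Set.ncard_prod, Complex.ncard_setOf_pow_eq three_pos (neg_ne_zero.mpr one_ne_zero)
      (by norm_num), Complex.ncard_setOf_pow_eq three_pos one_ne_zero (one_pow 3)]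
    rfl
  have hSfin : S.Finite := Set.finite_of_ncard_pos (by rw [hS]; norm_num)
  let f₁ : ℂ × ℂ → ℂ × ℂ × ℂ × ℂ × ℂ × ℂ := fun q => (0, q.1, 0, q.2, 0, 0)
  let f₂ : ℂ × ℂ → ℂ × ℂ × ℂ × ℂ × ℂ × ℂ := fun q => (q.1, 0, 0, 0, q.2, 0)
  have hf₁ : f₁.Injective := fun p q h => by simp_all [f₁, Prod.ext_iff]
  have hf₂ : f₂.Injective := fun p q h => by simp_all [f₂, Prod.ext_iff]
  have hdisj : Disjoint (f₁ '' S) (f₂ '' S) := by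
    rw [Set.disjoint_left]
    rintro _ ⟨q, -, rfl⟩ ⟨q', ⟨hq', -⟩, h⟩
    have : q'.1 = 0 := congrArg Prod.fst h
    simp [this] at hq'
  calc _ = (f₁ '' S ∪ f₂ '' S).ncard := by
        congr 1
        ext ⟨a, b, c, x, y, z⟩
        simp only [S, f₁, f₂, Set.mem_union, Set.mem_image, Set.mem_prod, Prod.exists,
          Prod.mk.injEq]
        aesop
    _ = 18 := by
      rw [Set.ncard_union_eq hdisj (hSfin.image f₁) (hSfin.image f₂),
        Set.ncard_image_of_injective S hf₁, Set.ncard_image_of_injective S hf₂, hS]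

end FermatCubic

/-- The intersection of the components `M₁(F₄)` and `M₂(F₄)` of the curve of
second-type lines of the Fermat cubic in the chart `p₀₁ = 1`: the system consisting of
the four Fano equations together with `Q₁ = Q₂ = 0` has exactly the 18 solutions
`(0, ω, 0, η, 0, 0)` and `(ω, 0, 0, 0, η, 0)` with `ω³ = -1`, `η³ = 1`. -/
theorem fermat_M1_M2_intersection :
    (∀ p₀₂ p₀₃ p₀₄ p₁₂ p₁₃ p₁₄ : ℂ,
      (p₁₂ ^ 3 + p₁₃ ^ 3 + p₁₄ ^ 3 = 1 ∧
       p₀₂ * p₁₂ ^ 2 + p₀₃ * p₁₃ ^ 2 + p₀₄ * p₁₄ ^ 2 = 0 ∧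
       p₀₂ ^ 2 * p₁₂ + p₀₃ ^ 2 * p₁₃ + p₀₄ ^ 2 * p₁₄ = 0 ∧
       p₀₂ ^ 3 + p₀₃ ^ 3 + p₀₄ ^ 3 = -1 ∧
       p₀₄ * p₁₃ - p₀₃ * p₁₄ = 0 ∧
       p₀₄ * p₁₂ - p₀₂ * p₁₄ = 0) ↔
      ((p₀₂ = 0 ∧ p₀₃ ^ 3 = -1 ∧ p₀₄ = 0 ∧ p₁₂ ^ 3 = 1 ∧ p₁₃ = 0 ∧ p₁₄ = 0) ∨
       (p₀₂ ^ 3 = -1 ∧ p₀₃ = 0 ∧ p₀₄ = 0 ∧ p₁₂ = 0 ∧ p₁₃ ^ 3 = 1 ∧ p₁₄ = 0))) ∧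
    Set.ncard {p : ℂ × ℂ × ℂ × ℂ × ℂ × ℂ |
      p.2.2.2.1 ^ 3 + p.2.2.2.2.1 ^ 3 + p.2.2.2.2.2 ^ 3 = 1 ∧
      p.1 * p.2.2.2.1 ^ 2 + p.2.1 * p.2.2.2.2.1 ^ 2 + p.2.2.1 * p.2.2.2.2.2 ^ 2 = 0 ∧
      p.1 ^ 2 * p.2.2.2.1 + p.2.1 ^ 2 * p.2.2.2.2.1 + p.2.2.1 ^ 2 * p.2.2.2.2.2 = 0 ∧
      p.1 ^ 3 + p.2.1 ^ 3 + p.2.2.1 ^ 3 = -1 ∧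
      p.2.2.1 * p.2.2.2.2.1 - p.2.1 * p.2.2.2.2.2 = 0 ∧
      p.2.2.1 * p.2.2.2.1 - p.1 * p.2.2.2.2.2 = 0} = 18 := by
  refine ⟨fun _ _ _ _ _ _ => FermatCubic.solutions_iff, ?_⟩
  rw [← FermatCubic.ncard_solutions]
  congr 1
  ext p
  exact FermatCubic.solutions_iff
end

section
/- There is no solution in ℂ⁶ of the system p₁₂³+p₁₃³+p₁₄³=1, p₀₂p₁₂²+p₀₃p₁₃²+p₀₄p₁₄²=0, p₀₂²p₁₂+p₀₃²p₁₃+p₀₄²p₁₄=0, p₀₂³+p₀₃³+p₀₄³=-1 satisfying simultaneously p₀₄p₁₃-p₀₃p₁₄=0, p₀₄p₁₂-p₀₂p₁₄=0 and p₀₃p₁₂-p₀₂p₁₃=0. -/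
/-- The three components `M₁(F₄)`, `M₂(F₄)`, `M₃(F₄)` of the curve of second-type lines
of the Fermat cubic (in the chart `p₀₁ = 1`) have empty triple intersection. -/
theorem fermat_triple_intersection_empty :
    ¬ ∃ p₀₂ p₀₃ p₀₄ p₁₂ p₁₃ p₁₄ : ℂ,
      p₁₂ ^ 3 + p₁₃ ^ 3 + p₁₄ ^ 3 = 1 ∧
      p₀₂ * p₁₂ ^ 2 + p₀₃ * p₁₃ ^ 2 + p₀₄ * p₁₄ ^ 2 = 0 ∧
      p₀₂ ^ 2 * p₁₂ + p₀₃ ^ 2 * p₁₃ + p₀₄ ^ 2 * p₁₄ = 0 ∧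
      p₀₂ ^ 3 + p₀₃ ^ 3 + p₀₄ ^ 3 = -1 ∧
      p₀₄ * p₁₃ - p₀₃ * p₁₄ = 0 ∧
      p₀₄ * p₁₂ - p₀₂ * p₁₄ = 0 ∧
      p₀₃ * p₁₂ - p₀₂ * p₁₃ = 0 := by
  rintro ⟨a2, a3, a4, b2, b3, b4, h1, h2, h3, h4, h5, h6, h7⟩
  have hb2 : b2 ^ 2 = 0 := by
    linear_combination (b2 ^ 2) * h4 - a2 ^ 2 * h2 -
      a3 * (a3 * b2 + a2 * b3) * h7 - a4 * (a4 * b2 + a2 * b4) * h6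
  have hb3 : b3 ^ 2 = 0 := by
    linear_combination (b3 ^ 2) * h4 - a3 ^ 2 * h2 +
      a2 * (a2 * b3 + a3 * b2) * h7 - a4 * (a4 * b3 + a3 * b4) * h5
  have hb4 : b4 ^ 2 = 0 := by
    linear_combination (b4 ^ 2) * h4 - a4 ^ 2 * h2 +
      a2 * (a2 * b4 + a4 * b2) * h6 + a3 * (a3 * b4 + a4 * b3) * h5
  have hb2' : b2 = 0 := by
    have := pow_eq_zero_iff (n := 2) (by norm_num) |>.mp hb2; exact this
  have hb3' : b3 = 0 := by
    have := pow_eq_zero_iff (n := 2) (by norm_num) |>.mp hb3; exact this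
  have hb4' : b4 = 0 := by
    have := pow_eq_zero_iff (n := 2) (by norm_num) |>.mp hb4; exact this
  rw [hb2', hb3', hb4'] at h1
  norm_num at h1
end

section
/- The Fermat cubic surface-counting system in the chart p₀₁=1 has exactly 54 points corresponding to triple lines: the solutions of the Fano equations (p₁₂³+p₁₃³+p₁₄³=1, p₀₂p₁₂²+p₀₃p₁₃²+p₀₄p₁₄²=0, p₀₂²p₁₂+p₀₃²p₁₃+p₀₄²p₁₄=0, p₀₂³+p₀₃³+p₀₄³=-1) at which at least two of the three quadrics Q₁=p₀₄p₁₃-p₀₃p₁₄, Q₂=p₀₄p₁₂-p₀₂p₁₄, Q₃=p₀₃p₁₂-p₀₂p₁₃ vanish number exactly 54. -/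
open Polynomial Finset

/-!
On `Q₂ = Q₃ = 0` one has `p₁₂² (p₀₂³ + p₀₃³ + p₀₄³) = p₀₂² (p₀₂p₁₂² + p₀₃p₁₃² + p₀₄p₁₄²)`, so the
Fano equations force `p₁₂ = 0`, and then `p₀₂ = 0`. In the remaining two-variable system `Q₁`
cannot vanish, which leaves `p₀₃ = p₁₄ = 0` or `p₀₄ = p₁₃ = 0`. Permuting the indices `2, 3, 4`,
the triple lines are exactly the points with one nonzero `p₀ᵢ`, a cube root of `-1`, one nonzero
`p₁ⱼ`, a cube root of `1`, and `i ≠ j`: there are `6 · 3 · 3 = 54` of them.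
-/

-- `(a, b, c, x, y, z)` stands for `(p₀₂, p₀₃, p₀₄, p₁₂, p₁₃, p₁₄)`.
def FanoEqs (a b c x y z : ℂ) : Prop :=
  x ^ 3 + y ^ 3 + z ^ 3 = 1 ∧ a * x ^ 2 + b * y ^ 2 + c * z ^ 2 = 0 ∧
    a ^ 2 * x + b ^ 2 * y + c ^ 2 * z = 0 ∧ a ^ 3 + b ^ 3 + c ^ 3 = -1

namespace FanoEqs

variable {a b c x y z : ℂ}

lemma rotate (h : FanoEqs a b c x y z) : FanoEqs b c a y z x := by
  obtain ⟨h₁, h₂, h₃, h₄⟩ := h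
  exact ⟨by linear_combination h₁, by linear_combination h₂, by linear_combination h₃,
    by linear_combination h₄⟩

lemma eq_zero_of_quadrics (h : FanoEqs a b c x y z) (q₂ : c * x - a * z = 0)
    (q₃ : b * x - a * y = 0) : a = 0 ∧ x = 0 := by
  obtain ⟨h₁, h₂, -, h₄⟩ := h
  have hx : x = 0 := pow_eq_zero_iff two_ne_zero |>.1 <| by
    linear_combination x ^ 2 * h₄ - a ^ 2 * h₂ - b * (a * y + b * x) * q₃ -
      c * (a * z + c * x) * q₂
  subst hx
  refine ⟨?_, rfl⟩
  by_contra ha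
  have hy : y = 0 := (mul_eq_zero.1 (by linear_combination -q₃ : a * y = 0)).resolve_left ha
  have hz : z = 0 := (mul_eq_zero.1 (by linear_combination -q₂ : a * z = 0)).resolve_left ha
  subst hy hz
  norm_num at h₁

lemma of_first_eq_zero (h : FanoEqs 0 b c 0 y z) :
    (b = 0 ∧ z = 0 ∧ c ^ 3 = -1 ∧ y ^ 3 = 1) ∨ (c = 0 ∧ y = 0 ∧ b ^ 3 = -1 ∧ z ^ 3 = 1) := by
  obtain ⟨h₁, h₂, h₃, h₄⟩ := h
  have hD : c * y - b * z ≠ 0 := by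
    intro hD
    have hy : y = 0 := by linear_combination y * h₄ - b * h₃ - c ^ 2 * hD
    have hz : z = 0 := by linear_combination z * h₄ - c * h₃ + b ^ 2 * hD
    subst hy hz
    norm_num at h₁
  have hcz : c * z = 0 := (mul_eq_zero.1 (by linear_combination y * h₃ - b * h₂ :
    c * z * (c * y - b * z) = 0)).resolve_right hD
  have hby : b * y = 0 := (mul_eq_zero.1 (by linear_combination c * h₂ - z * h₃ :
    b * y * (c * y - b * z) = 0)).resolve_right hD
  rcases mul_eq_zero.1 hcz with rfl | rfl
  · have hb : b ^ 3 = -1 := by linear_combination h₄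
    obtain rfl : y = 0 := (mul_eq_zero.1 hby).resolve_left (by rintro rfl; norm_num at hb)
    exact .inr ⟨rfl, rfl, hb, by linear_combination h₁⟩
  · have hy : y ^ 3 = 1 := by linear_combination h₁
    obtain rfl : b = 0 := (mul_eq_zero.1 hby).resolve_right (by rintro rfl; norm_num at hy)
    exact .inl ⟨rfl, rfl, by linear_combination h₄, hy⟩

lemma of_quadrics_eq_zero (h : FanoEqs a b c x y z) (q₂ : c * x - a * z = 0)
    (q₃ : b * x - a * y = 0) :
    a = 0 ∧ x = 0 ∧
      ((b = 0 ∧ z = 0 ∧ c ^ 3 = -1 ∧ y ^ 3 = 1) ∨ (c = 0 ∧ y = 0 ∧ b ^ 3 = -1 ∧ z ^ 3 = 1)) := by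
  obtain ⟨rfl, rfl⟩ := h.eq_zero_of_quadrics q₂ q₃
  exact ⟨rfl, rfl, h.of_first_eq_zero⟩

end FanoEqs

theorem Complex.card_nthRootsFinset {n : ℕ} (hn : n ≠ 0) {a : ℂ} (ha : a ≠ 0) :
    #(nthRootsFinset n a) = n := by
  have hζ := Complex.isPrimitiveRoot_exp n hn
  obtain ⟨α, hα⟩ := IsAlgClosed.exists_pow_nat_eq a (Nat.pos_of_ne_zero hn)
  classical
  rw [nthRootsFinset_def, Multiset.toFinset_card_of_nodup (hζ.nthRoots_nodup ha),
    hζ.card_nthRoots, if_pos ⟨α, hα⟩]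

-- The index `i : Fin 3` stands for the coordinate index `i + 2`.
def axisPoint : Fin 3 → ℂ → ℂ × ℂ × ℂ
  | 0, t => (t, 0, 0)
  | 1, t => (0, t, 0)
  | 2, t => (0, 0, t)

lemma axisPoint_eq_axisPoint_iff {i i' : Fin 3} {v v' : ℂ} (hv : v ≠ 0) :
    axisPoint i v = axisPoint i' v' ↔ i = i' ∧ v = v' := by
  fin_cases i <;> fin_cases i' <;> simp [axisPoint, hv, eq_comm]

def tripleLinePoint (i j : Fin 3) (v u : ℂ) : ℂ × ℂ × ℂ × ℂ × ℂ × ℂ :=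
  let p := axisPoint i v
  let q := axisPoint j u
  (p.1, p.2.1, p.2.2, q.1, q.2.1, q.2.2)

lemma eq_of_tripleLinePoint_eq {i j i' j' : Fin 3} {v u v' u' : ℂ} (hv : v ≠ 0) (hu : u ≠ 0)
    (h : tripleLinePoint i j v u = tripleLinePoint i' j' v' u') :
    i = i' ∧ j = j' ∧ v = v' ∧ u = u' := by
  simp only [tripleLinePoint, Prod.mk.injEq] at h
  obtain ⟨h₁, h₂, h₃, h₄, h₅, h₆⟩ := h
  obtain ⟨rfl, rfl⟩ := (axisPoint_eq_axisPoint_iff hv).1 (Prod.ext h₁ (Prod.ext h₂ h₃))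
  obtain ⟨rfl, rfl⟩ := (axisPoint_eq_axisPoint_iff hu).1 (Prod.ext h₄ (Prod.ext h₅ h₆))
  exact ⟨rfl, rfl, rfl, rfl⟩

def tripleLines : Set (ℂ × ℂ × ℂ × ℂ × ℂ × ℂ) :=
  {p | FanoEqs p.1 p.2.1 p.2.2.1 p.2.2.2.1 p.2.2.2.2.1 p.2.2.2.2.2 ∧
    ((p.2.2.1 * p.2.2.2.2.1 - p.2.1 * p.2.2.2.2.2 = 0 ∧
        p.2.2.1 * p.2.2.2.1 - p.1 * p.2.2.2.2.2 = 0) ∨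
      (p.2.2.1 * p.2.2.2.2.1 - p.2.1 * p.2.2.2.2.2 = 0 ∧
        p.2.1 * p.2.2.2.1 - p.1 * p.2.2.2.2.1 = 0) ∨
      (p.2.2.1 * p.2.2.2.1 - p.1 * p.2.2.2.2.2 = 0 ∧
        p.2.1 * p.2.2.2.1 - p.1 * p.2.2.2.2.1 = 0))}

lemma tripleLinePoint_mem_tripleLines {i j : Fin 3} (hij : i ≠ j) {v u : ℂ} (hv : v ^ 3 = -1)
    (hu : u ^ 3 = 1) : tripleLinePoint i j v u ∈ tripleLines := by
  fin_cases i <;> fin_cases j <;> simp_all [tripleLines, FanoEqs, tripleLinePoint, axisPoint]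

lemma exists_tripleLinePoint_of_mem_tripleLines {p : ℂ × ℂ × ℂ × ℂ × ℂ × ℂ}
    (hp : p ∈ tripleLines) :
    ∃ i j v u, i ≠ j ∧ v ^ 3 = -1 ∧ u ^ 3 = 1 ∧ tripleLinePoint i j v u = p := by
  obtain ⟨a, b, c, x, y, z⟩ := p
  obtain ⟨h, ⟨q₁, q₂⟩ | ⟨q₁, q₃⟩ | ⟨q₂, q₃⟩⟩ := hp
  · obtain ⟨rfl, rfl, hbc⟩ :=
      h.rotate.rotate.of_quadrics_eq_zero (by linear_combination -q₁) (by linear_combination -q₂)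
    rcases hbc with ⟨rfl, rfl, hb, hx⟩ | ⟨rfl, rfl, ha, hy⟩
    · exact ⟨1, 0, b, x, by decide, hb, hx, rfl⟩
    · exact ⟨0, 1, a, y, by decide, ha, hy, rfl⟩
  · obtain ⟨rfl, rfl, hca⟩ :=
      h.rotate.of_quadrics_eq_zero (by linear_combination -q₃) (by linear_combination q₁)
    rcases hca with ⟨rfl, rfl, ha, hz⟩ | ⟨rfl, rfl, hc, hx⟩
    · exact ⟨0, 2, a, z, by decide, ha, hz, rfl⟩
    · exact ⟨2, 0, c, x, by decide, hc, hx, rfl⟩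
  · obtain ⟨rfl, rfl, hbc⟩ := h.of_quadrics_eq_zero q₂ q₃
    rcases hbc with ⟨rfl, rfl, hc, hy⟩ | ⟨rfl, rfl, hb, hz⟩
    · exact ⟨2, 1, c, y, by decide, hc, hy, rfl⟩
    · exact ⟨1, 2, b, z, by decide, hb, hz, rfl⟩

noncomputable def tripleLineParams : Finset ((Fin 3 × Fin 3) × ℂ × ℂ) :=
  univ.offDiag ×ˢ (nthRootsFinset 3 (-1 : ℂ) ×ˢ nthRootsFinset 3 (1 : ℂ))

lemma tripleLines_eq_image :
    tripleLines = ↑(tripleLineParams.image fun q => tripleLinePoint q.1.1 q.1.2 q.2.1 q.2.2) := by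
  ext p
  simp only [tripleLineParams, coe_image, Set.mem_image, coe_product, Set.mem_prod, mem_coe,
    mem_offDiag, mem_univ, true_and, mem_nthRootsFinset three_pos, Prod.exists]
  constructor
  · intro hp
    obtain ⟨i, j, v, u, hij, hv, hu, rfl⟩ := exists_tripleLinePoint_of_mem_tripleLines hp
    exact ⟨i, j, v, u, ⟨hij, hv, hu⟩, rfl⟩
  · rintro ⟨i, j, v, u, ⟨hij, hv, hu⟩, rfl⟩
    exact tripleLinePoint_mem_tripleLines hij hv hu

lemma tripleLinePoint_injOn :
    Set.InjOn (fun q : (Fin 3 × Fin 3) × ℂ × ℂ => tripleLinePoint q.1.1 q.1.2 q.2.1 q.2.2)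
      tripleLineParams := by
  rintro ⟨⟨i, j⟩, v, u⟩ hq ⟨⟨i', j'⟩, v', u'⟩ - h
  simp only [tripleLineParams, coe_product, Set.mem_prod, mem_coe] at hq
  obtain ⟨rfl, rfl, rfl, rfl⟩ := eq_of_tripleLinePoint_eq
    (ne_zero_of_mem_nthRootsFinset (by norm_num) hq.2.1)
    (ne_zero_of_mem_nthRootsFinset one_ne_zero hq.2.2) h
  rfl

/-- In the affine chart `p₀₁ = 1`, the Fermat cubic has exactly 54 triple lines: the
points of the Fano surface (cut out by the four Fano equations) at which at least two
of the three quadrics `Q₁ = p₀₄p₁₃-p₀₃p₁₄`, `Q₂ = p₀₄p₁₂-p₀₂p₁₄`, `Q₃ = p₀₃p₁₂-p₀₂p₁₃`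
vanish number exactly 54. -/
theorem fermat_54_triple_lines_in_chart :
    Set.ncard {p : ℂ × ℂ × ℂ × ℂ × ℂ × ℂ |
      (p.2.2.2.1 ^ 3 + p.2.2.2.2.1 ^ 3 + p.2.2.2.2.2 ^ 3 = 1 ∧
       p.1 * p.2.2.2.1 ^ 2 + p.2.1 * p.2.2.2.2.1 ^ 2 + p.2.2.1 * p.2.2.2.2.2 ^ 2 = 0 ∧
       p.1 ^ 2 * p.2.2.2.1 + p.2.1 ^ 2 * p.2.2.2.2.1 + p.2.2.1 ^ 2 * p.2.2.2.2.2 = 0 ∧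
       p.1 ^ 3 + p.2.1 ^ 3 + p.2.2.1 ^ 3 = -1) ∧
      ((p.2.2.1 * p.2.2.2.2.1 - p.2.1 * p.2.2.2.2.2 = 0 ∧
        p.2.2.1 * p.2.2.2.1 - p.1 * p.2.2.2.2.2 = 0) ∨
       (p.2.2.1 * p.2.2.2.2.1 - p.2.1 * p.2.2.2.2.2 = 0 ∧
        p.2.1 * p.2.2.2.1 - p.1 * p.2.2.2.2.1 = 0) ∨
       (p.2.2.1 * p.2.2.2.1 - p.1 * p.2.2.2.2.2 = 0 ∧
        p.2.1 * p.2.2.2.1 - p.1 * p.2.2.2.2.1 = 0))} = 54 := by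
  change tripleLines.ncard = 54
  rw [tripleLines_eq_image, Set.ncard_coe_finset, card_image_of_injOn tripleLinePoint_injOn,
    tripleLineParams, card_product, card_product, offDiag_card,
    Complex.card_nthRootsFinset three_ne_zero (by norm_num),
    Complex.card_nthRootsFinset three_ne_zero one_ne_zero]
  simp
end

section
/- For the Fermat cubic F₄ = {x₀³+⋯+x₄³=0}, every line of the form {x_i + ζx_j = 0, x_k + ξx_l = 0, x_m = 0}, where {i,j,k,l,m} = {0,1,2,3,4} and ζ³ = ξ³ = 1, lies on F₄ and is a triple line. There are exactly 135 such lines. -/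
/-!
The line lies in the plane spanned by it and the coordinate vector `e_m`. Parametrising that
plane by `(t, s, u)`, the Fermat cubic restricts to `(1 - ζ³) t³ + (1 - ξ³) s³ + u³ = u³`, so the
plane meets the cubic in `3ℓ`.

For the count, the data `(i, j, k, l, m, ζ, ξ)` of a line has the symmetries
`(i, j, ζ) ↦ (j, i, ζ²)`, `(k, l, ξ) ↦ (l, k, ξ²)` and the exchange of the two pairs, so every line
has a representative with `i < j`, `k < l`, `i < k`: 15 index tuples and 9 choices of `(ζ, ξ)`.
The representative is determined by the line: the support of a vector on the line avoids `m` and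
is a union of the blocks `{i, j}`, `{k, l}`; since `e_j - ζ e_i` and `e_l - ξ e_k` lie on the line,
this recovers the blocks, and then `ζ` and `ξ`.
-/

open Finset Polynomial

theorem card_eq_five_iff_pairwise_ne (i j k l m : Fin 5) :
    ({i, j, k, l, m} : Finset (Fin 5)).card = 5 ↔
      i ≠ j ∧ i ≠ k ∧ i ≠ l ∧ i ≠ m ∧ j ≠ k ∧ j ≠ l ∧ j ≠ m ∧ k ≠ l ∧ k ≠ m ∧ l ≠ m := by
  revert i j k l m; decide

theorem card_swap_pairs (i j k l m : Fin 5) :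
    ({k, l, i, j, m} : Finset (Fin 5)).card = ({i, j, k, l, m} : Finset (Fin 5)).card := by
  congr 1; ext; simp only [mem_insert, mem_singleton]; tauto

theorem sum_univ_eq_of_card_eq_five {M : Type*} [AddCommMonoid M] {i j k l m : Fin 5}
    (h : ({i, j, k, l, m} : Finset (Fin 5)).card = 5) (f : Fin 5 → M) :
    ∑ n, f n = f i + f j + f k + f l + f m := by
  obtain ⟨hij, hik, hil, him, hjk, hjl, hjm, hkl, hkm, hlm⟩ :=
    (card_eq_five_iff_pairwise_ne i j k l m).mp h
  rw [← eq_univ_of_card _ (h.trans (card_fin 5).symm)]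
  simp [sum_insert, *, add_assoc]

def IsCanonical (i j k l m : Fin 5) : Prop :=
  i < j ∧ k < l ∧ i < k ∧ ({i, j, k, l, m} : Finset (Fin 5)).card = 5

instance (i j k l m : Fin 5) : Decidable (IsCanonical i j k l m) := by
  unfold IsCanonical; infer_instance

def canonicalIndices : Finset (Fin 5 × Fin 5 × Fin 5 × Fin 5 × Fin 5) :=
  univ.filter fun t => IsCanonical t.1 t.2.1 t.2.2.1 t.2.2.2.1 t.2.2.2.2

set_option maxRecDepth 10000 in
theorem card_canonicalIndices : canonicalIndices.card = 15 := by decide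

@[simp]
theorem mem_canonicalIndices {i j k l m : Fin 5} :
    (i, j, k, l, m) ∈ canonicalIndices ↔ IsCanonical i j k l m := by
  simp [canonicalIndices]

/-- `s` is a union of blocks of the partition `{{i, j}, {k, l}, {m}}` avoiding the block `{m}`. -/
def IsBlockUnion (s : Finset (Fin 5)) (i j k l m : Fin 5) : Prop :=
  m ∉ s ∧ (i ∈ s ↔ j ∈ s) ∧ (k ∈ s ↔ l ∈ s)

instance (s : Finset (Fin 5)) (i j k l m : Fin 5) : Decidable (IsBlockUnion s i j k l m) := by
  unfold IsBlockUnion; infer_instance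

set_option maxRecDepth 10000 in
theorem eq_of_isBlockUnion : ∀ t ∈ canonicalIndices, ∀ t' ∈ canonicalIndices,
    IsBlockUnion {t.1, t.2.1} t'.1 t'.2.1 t'.2.2.1 t'.2.2.2.1 t'.2.2.2.2 →
    IsBlockUnion {t.2.2.1, t.2.2.2.1} t'.1 t'.2.1 t'.2.2.1 t'.2.2.2.1 t'.2.2.2.2 → t = t' := by
  decide

theorem add_mul_eq_zero_comm_of_cube_eq_one {R : Type*} [CommRing R] {ζ : R} (hζ : ζ ^ 3 = 1)
    (a b : R) : a + ζ * b = 0 ↔ b + ζ ^ 2 * a = 0 :=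
  ⟨fun h => by linear_combination ζ ^ 2 * h - b * hζ,
    fun h => by linear_combination ζ * h - a * hζ⟩

theorem ne_zero_iff_of_add_mul_eq_zero {R : Type*} [CommRing R] [IsDomain R] {a b c : R}
    (h : a + c * b = 0) (hc : c ≠ 0) : a ≠ 0 ↔ b ≠ 0 := by
  rw [eq_neg_of_add_eq_zero_left h, neg_ne_zero, mul_ne_zero_iff, and_iff_right hc]

theorem sum_cube_restrict_plane_eq_cube {R : Type*} [CommRing R] {i j k l m : Fin 5}
    (h : ({i, j, k, l, m} : Finset (Fin 5)).card = 5) {ζ ξ : R} (hζ : ζ ^ 3 = 1)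
    (hξ : ξ ^ 3 = 1) (t s u : R) :
    ∑ n : Fin 5, (if n = i then -ζ * t else if n = j then t else
      if n = k then -ξ * s else if n = l then s else u) ^ 3 = u ^ 3 := by
  obtain ⟨hij, hik, hil, him, hjk, hjl, hjm, hkl, hkm, hlm⟩ :=
    (card_eq_five_iff_pairwise_ne i j k l m).mp h
  rw [sum_univ_eq_of_card_eq_five h]
  simp only [hij.symm, hik.symm, hil.symm, him.symm, hjk.symm, hjl.symm, hjm.symm, hkl.symm,
    hkm.symm, hlm.symm, ↓reduceIte]
  linear_combination (-t ^ 3) * hζ + (-s ^ 3) * hξ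

section FermatLine

variable {K : Type*} [CommRing K] {i j k l m : Fin 5} {ζ ξ : K}

def fermatLine (i j k l m : Fin 5) (ζ ξ : K) : Set (Fin 5 → K) :=
  {x | x i + ζ * x j = 0 ∧ x k + ξ * x l = 0 ∧ x m = 0}

theorem fermatLine_swap_left (hζ : ζ ^ 3 = 1) :
    fermatLine i j k l m ζ ξ = fermatLine j i k l m (ζ ^ 2) ξ :=
  Set.ext fun _ => and_congr_left' (add_mul_eq_zero_comm_of_cube_eq_one hζ _ _)

theorem fermatLine_swap_pairs : fermatLine i j k l m ζ ξ = fermatLine k l i j m ξ ζ :=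
  Set.ext fun _ => and_left_comm

theorem exists_isCanonical_fermatLine_eq (h : ({i, j, k, l, m} : Finset (Fin 5)).card = 5)
    (hζ : ζ ^ 3 = 1) (hξ : ξ ^ 3 = 1) :
    ∃ i' j' k' l' : Fin 5, ∃ ζ' ξ' : K, IsCanonical i' j' k' l' m ∧ ζ' ^ 3 = 1 ∧ ξ' ^ 3 = 1 ∧
      fermatLine i j k l m ζ ξ = fermatLine i' j' k' l' m ζ' ξ' := by
  have sq_cube (ω : K) (hω : ω ^ 3 = 1) : (ω ^ 2) ^ 3 = 1 := by
    rw [← pow_mul, mul_comm, pow_mul, hω, one_pow]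
  wlog hij : i < j generalizing i j ζ
  · obtain ⟨hij_ne, -⟩ := (card_eq_five_iff_pairwise_ne i j k l m).mp h
    rw [fermatLine_swap_left hζ]
    exact this (h := by rwa [insert_comm]) (hζ := sq_cube ζ hζ)
      (hij := (not_lt.mp hij).lt_of_ne hij_ne.symm)
  wlog hkl : k < l generalizing k l ξ
  · obtain ⟨-, -, -, -, -, -, -, hkl_ne, -⟩ := (card_eq_five_iff_pairwise_ne i j k l m).mp h
    rw [fermatLine_swap_pairs, fermatLine_swap_left hξ, fermatLine_swap_pairs]
    exact this (h := by rwa [insert_comm l k]) (hξ := sq_cube ξ hξ)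
      (hkl := (not_lt.mp hkl).lt_of_ne hkl_ne.symm)
  wlog hik : i < k generalizing i j k l ζ ξ
  · obtain ⟨-, hik_ne, -⟩ := (card_eq_five_iff_pairwise_ne i j k l m).mp h
    rw [fermatLine_swap_pairs]
    exact this (h := by rwa [card_swap_pairs]) (hζ := hξ) (hξ := hζ) (hij := hkl) (hkl := hij)
      (hik := (not_lt.mp hik).lt_of_ne hik_ne.symm)
  exact ⟨i, j, k, l, ζ, ξ, ⟨hij, hkl, hik, h⟩, hζ, hξ, rfl⟩

def pairVector (i j : Fin 5) (ζ : K) : Fin 5 → K :=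
  Pi.single j 1 - Pi.single i ζ

theorem pairVector_apply_left (hij : i ≠ j) : pairVector i j ζ i = -ζ := by
  simp [pairVector, hij]

theorem pairVector_apply_right (hij : i ≠ j) : pairVector i j ζ j = 1 := by
  simp [pairVector, hij.symm]

theorem pairVector_apply_of_ne {a : Fin 5} (hi : a ≠ i) (hj : a ≠ j) :
    pairVector i j ζ a = 0 := by
  simp [pairVector, hi, hj]

theorem pairVector_mem_fermatLine (h : ({i, j, k, l, m} : Finset (Fin 5)).card = 5) :
    pairVector i j ζ ∈ fermatLine i j k l m ζ ξ := by
  obtain ⟨hij, hik, hil, him, hjk, hjl, hjm, -, -, -⟩ :=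
    (card_eq_five_iff_pairwise_ne i j k l m).mp h
  refine ⟨?_, ?_, pairVector_apply_of_ne him.symm hjm.symm⟩
  · rw [pairVector_apply_left hij, pairVector_apply_right hij, mul_one, neg_add_cancel]
  · rw [pairVector_apply_of_ne hik.symm hjk.symm, pairVector_apply_of_ne hil.symm hjl.symm,
      mul_zero, add_zero]

theorem pairVector_ne_zero_iff [IsDomain K] (hij : i ≠ j) (hζ : ζ ≠ 0) (a : Fin 5) :
    pairVector i j ζ a ≠ 0 ↔ a ∈ ({i, j} : Finset (Fin 5)) := by
  by_cases hai : a = i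
  · subst hai; simp [pairVector_apply_left hij, hζ]
  by_cases haj : a = j
  · subst haj; simp [pairVector_apply_right hij]
  simp [pairVector_apply_of_ne hai haj, hai, haj]

theorem isBlockUnion_of_mem_fermatLine [IsDomain K] {x : Fin 5 → K} {s : Finset (Fin 5)}
    (hs : ∀ a, x a ≠ 0 ↔ a ∈ s) (hx : x ∈ fermatLine i j k l m ζ ξ) (hζ : ζ ≠ 0)
    (hξ : ξ ≠ 0) : IsBlockUnion s i j k l m := by
  simp only [IsBlockUnion, ← hs, not_not]
  exact ⟨hx.2.2, ne_zero_iff_of_add_mul_eq_zero hx.1 hζ,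
    ne_zero_iff_of_add_mul_eq_zero hx.2.1 hξ⟩

theorem eq_of_fermatLine_eq [IsDomain K] {i' j' k' l' m' : Fin 5} {ζ' ξ' : K}
    (ht : IsCanonical i j k l m) (ht' : IsCanonical i' j' k' l' m')
    (hζ : ζ ≠ 0) (hξ : ξ ≠ 0) (hζ' : ζ' ≠ 0) (hξ' : ξ' ≠ 0)
    (h : fermatLine i j k l m ζ ξ = fermatLine i' j' k' l' m' ζ' ξ') :
    (i, j, k, l, m) = (i', j', k', l', m') ∧ ζ = ζ' ∧ ξ = ξ' := by
  have h₁ : pairVector i j ζ ∈ fermatLine i' j' k' l' m' ζ' ξ' :=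
    h ▸ pairVector_mem_fermatLine ht.2.2.2
  have h₂ : pairVector k l ξ ∈ fermatLine i' j' k' l' m' ζ' ξ' := by
    rw [← h, fermatLine_swap_pairs]
    exact pairVector_mem_fermatLine (by rw [card_swap_pairs]; exact ht.2.2.2)
  have hidx := eq_of_isBlockUnion _ (mem_canonicalIndices.mpr ht) _ (mem_canonicalIndices.mpr ht')
    (isBlockUnion_of_mem_fermatLine (pairVector_ne_zero_iff ht.1.ne hζ) h₁ hζ' hξ')
    (isBlockUnion_of_mem_fermatLine (pairVector_ne_zero_iff ht.2.1.ne hξ) h₂ hζ' hξ')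
  simp only [Prod.mk.injEq] at hidx
  obtain ⟨rfl, rfl, rfl, rfl, rfl⟩ := hidx
  have e₁ := h₁.1
  have e₂ := h₂.2.1
  rw [pairVector_apply_left ht.1.ne, pairVector_apply_right ht.1.ne] at e₁
  rw [pairVector_apply_left ht.2.1.ne, pairVector_apply_right ht.2.1.ne] at e₂
  exact ⟨rfl, by linear_combination -e₁, by linear_combination -e₂⟩

def fermatLineOfTuple (p : (Fin 5 × Fin 5 × Fin 5 × Fin 5 × Fin 5) × K × K) :
    Set (Fin 5 → K) :=
  fermatLine p.1.1 p.1.2.1 p.1.2.2.1 p.1.2.2.2.1 p.1.2.2.2.2 p.2.1 p.2.2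

theorem setOf_fermatLine_eq_image [IsDomain K] [DecidableEq K] :
    {L | ∃ (i j k l m : Fin 5) (ζ ξ : K),
      ({i, j, k, l, m} : Finset (Fin 5)).card = 5 ∧ ζ ^ 3 = 1 ∧ ξ ^ 3 = 1 ∧
      L = fermatLine i j k l m ζ ξ} =
      fermatLineOfTuple ''
        ↑(canonicalIndices ×ˢ nthRootsFinset 3 (1 : K) ×ˢ nthRootsFinset 3 (1 : K)) := by
  ext L
  constructor
  · rintro ⟨i, j, k, l, m, ζ, ξ, h, hζ, hξ, rfl⟩
    obtain ⟨i', j', k', l', ζ', ξ', hcan, hζ', hξ', heq⟩ :=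
      exists_isCanonical_fermatLine_eq h hζ hξ
    exact ⟨((i', j', k', l', m), ζ', ξ'), by simp [hcan, hζ', hξ'], heq.symm⟩
  · rintro ⟨⟨⟨i, j, k, l, m⟩, ζ, ξ⟩, hp, rfl⟩
    simp only [coe_product, Set.mem_prod, mem_coe, mem_canonicalIndices,
      mem_nthRootsFinset three_pos] at hp
    exact ⟨i, j, k, l, m, ζ, ξ, hp.1.2.2.2, hp.2.1, hp.2.2, rfl⟩

theorem injOn_fermatLineOfTuple [IsDomain K] [DecidableEq K] :
    Set.InjOn (fermatLineOfTuple (K := K))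
      ↑(canonicalIndices ×ˢ nthRootsFinset 3 (1 : K) ×ˢ nthRootsFinset 3 (1 : K)) := by
  rintro ⟨⟨i, j, k, l, m⟩, ζ, ξ⟩ hp ⟨⟨i', j', k', l', m'⟩, ζ', ξ'⟩ hq h
  simp only [coe_product, Set.mem_prod, mem_coe, mem_canonicalIndices,
    mem_nthRootsFinset three_pos] at hp hq
  have ne_zero {ω : K} (hω : ω ^ 3 = 1) : ω ≠ 0 := by rintro rfl; simp at hω
  obtain ⟨hidx, rfl, rfl⟩ := eq_of_fermatLine_eq hp.1 hq.1 (ne_zero hp.2.1) (ne_zero hp.2.2)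
    (ne_zero hq.2.1) (ne_zero hq.2.2) h
  rw [hidx]

end FermatLine

theorem ncard_fermatLines :
    {L : Set (Fin 5 → ℂ) | ∃ (i j k l m : Fin 5) (ζ ξ : ℂ),
      ({i, j, k, l, m} : Finset (Fin 5)).card = 5 ∧ ζ ^ 3 = 1 ∧ ξ ^ 3 = 1 ∧
      L = fermatLine i j k l m ζ ξ}.ncard = 135 := by
  classical
  rw [setOf_fermatLine_eq_image, injOn_fermatLineOfTuple.ncard_image, Set.ncard_coe_finset,
    card_product, card_product, card_canonicalIndices,
    (Complex.isPrimitiveRoot_exp 3 three_ne_zero).card_nthRootsFinset]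

/-- Every line `{xᵢ + ζxⱼ = 0, x_k + ξx_l = 0, x_m = 0}` with `{i,j,k,l,m} = {0,…,4}`
and `ζ³ = ξ³ = 1` lies on the Fermat cubic and is a triple line (the plane spanned by
the line and the `m`-th coordinate vector meets the Fermat cubic in `3ℓ`), and there
are exactly 135 such lines. -/
theorem fermat_135_triple_lines :
    (∀ (i j k l m : Fin 5), (({i, j, k, l, m} : Finset (Fin 5)).card = 5) →
      ∀ ζ ξ : ℂ, ζ ^ 3 = 1 → ξ ^ 3 = 1 →
      -- the parametrized plane (t,s on the line, u along the m-th coordinate)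
      -- meets the Fermat cubic in the divisor 3ℓ : the cubic restricts to u³
      ∀ t s u : ℂ,
        (∑ n : Fin 5,
          (if n = i then -ζ * t else if n = j then t else
           if n = k then -ξ * s else if n = l then s else u) ^ 3) = u ^ 3) ∧
    Set.ncard {L : Set (Fin 5 → ℂ) |
      ∃ (i j k l m : Fin 5) (ζ ξ : ℂ),
        (({i, j, k, l, m} : Finset (Fin 5)).card = 5) ∧ ζ ^ 3 = 1 ∧ ξ ^ 3 = 1 ∧
        L = {x : Fin 5 → ℂ | x i + ζ * x j = 0 ∧ x k + ξ * x l = 0 ∧ x m = 0}} = 135 :=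
  ⟨fun _ _ _ _ _ h _ _ hζ hξ => sum_cube_restrict_plane_eq_cube h hζ hξ, ncard_fermatLines⟩
end
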